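/- Let X be a metric space whose density character κ is infinite and has uncountable cofinality. Then there exist ε > 0 and a family (a_i)_{i < κ} of points of X such that d(a_i, a_j) ≥ ε for all i ≠ j. -/
import Mathlib


open Cardinal

/-- The density character of a topological space: the least cardinality of a dense subset. -/
noncomputable def densityChar (X : Type u) [TopologicalSpace X] : Cardinal.{u} :=
  sInf {c : Cardinal | ∃ D : Set X, Dense D ∧ #D = c}

lemma exists_maximal_sep (X : Type u) [MetricSpace X] {ε : ℝ} (hε : 0 < ε) :
    ∃ S : Set X, (∀ x ∈ S, ∀ y ∈ S, x ≠ y → ε ≤ dist x y) ∧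
      ∀ x : X, ∃ s ∈ S, dist x s < ε := by
  have hz : ∀ c ⊆ {S : Set X | ∀ x ∈ S, ∀ y ∈ S, x ≠ y → ε ≤ dist x y},
      IsChain (· ⊆ ·) c → ∃ ub ∈ {S : Set X | ∀ x ∈ S, ∀ y ∈ S, x ≠ y → ε ≤ dist x y},
        ∀ s ∈ c, s ⊆ ub := by
    intro c hc hchain
    refine ⟨⋃₀ c, ?_, fun s hs => Set.subset_sUnion_of_mem hs⟩
    rintro a ⟨s, hs, has⟩ b ⟨t, ht, hbt⟩ hab
    rcases hchain.total hs ht with hst | hts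
    · exact hc ht a (hst has) b hbt hab
    · exact hc hs a has b (hts hbt) hab
  obtain ⟨S, hS⟩ := zorn_subset {S : Set X | ∀ x ∈ S, ∀ y ∈ S, x ≠ y → ε ≤ dist x y} hz
  refine ⟨S, hS.prop, fun x => ?_⟩
  by_contra h
  push_neg at h
  have hins : insert x S ∈ {S : Set X | ∀ x ∈ S, ∀ y ∈ S, x ≠ y → ε ≤ dist x y} := by
    rintro a (rfl | ha) b (rfl | hb) hab
    · exact absurd rfl hab
    · exact h b hb
    · rw [dist_comm]; exact h a ha
    · exact hS.prop a ha b hb hab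
  have hsub : insert x S ⊆ S := hS.2 hins (Set.subset_insert x S)
  have hxS : x ∈ S := hsub (Set.mem_insert x S)
  have hc := h x hxS
  rw [dist_self] at hc
  exact absurd hc (not_le.mpr hε)

theorem stmt_6 (X : Type u) [MetricSpace X] (κ : Cardinal.{u})
    (hκ : densityChar X = κ) (hinf : ℵ₀ ≤ κ) (hcof : ℵ₀ < κ.ord.cof) :
    ∃ ε : ℝ, 0 < ε ∧ ∃ S : Set X, #S = κ ∧
      ∀ x ∈ S, ∀ y ∈ S, x ≠ y → ε ≤ dist x y := by
  have hεpos : ∀ n : ULift.{u} ℕ, (0 : ℝ) < 1 / (n.down + 1) := by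
    intro n; positivity
  choose T hT1 hT2 using fun n : ULift.{u} ℕ => exists_maximal_sep X (hεpos n)
  -- a dense set of cardinality κ
  have hκmem : κ ∈ {c : Cardinal | ∃ D : Set X, Dense D ∧ #D = c} := by
    rw [← hκ]
    exact csInf_mem ⟨#(Set.univ : Set X), Set.univ, dense_univ, rfl⟩
  obtain ⟨D, hDdense, hDcard⟩ := hκmem
  -- each T n has cardinality at most κ
  have hle : ∀ n, #(T n) ≤ κ := by
    intro n
    have hhalf : (0 : ℝ) < 1 / (n.down + 1) / 2 := by positivity
    have hf : ∀ s : T n, ∃ d : D, dist (s : X) (d : X) < 1 / (n.down + 1) / 2 := by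
      intro s
      obtain ⟨d, hd1, hd2⟩ := Metric.dense_iff.mp hDdense (s : X) _ hhalf
      exact ⟨⟨d, hd2⟩, by simpa [dist_comm] using hd1⟩
    choose f hfd using hf
    have hinj : Function.Injective f := by
      intro s t hst
      ext
      by_contra hne
      have h1 := hT1 n s s.2 t t.2 (by exact_mod_cast hne)
      have h2 := hfd s
      have h3 := hfd t
      rw [hst] at h2
      have : dist (s : X) (t : X) ≤ dist (s : X) (f t : X) + dist (t : X) (f t : X) :=
        dist_triangle_right _ _ _
      linarith
    calc #(T n) ≤ #D := Cardinal.mk_le_of_injective hinj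
      _ = κ := hDcard
  -- the union of the T n is dense
  have hdense : Dense (⋃ n, T n) := by
    rw [Metric.dense_iff]
    intro x r hr
    obtain ⟨m, hm⟩ := exists_nat_one_div_lt hr
    obtain ⟨s, hs, hds⟩ := hT2 (ULift.up.{u} m) x
    refine ⟨s, ?_, Set.mem_iUnion.mpr ⟨ULift.up.{u} m, hs⟩⟩
    rw [Metric.mem_ball, dist_comm]
    have hmr : (1 : ℝ) / (m + 1) < r := by exact_mod_cast hm
    exact hds.trans hmr
  -- hence κ ≤ #(⋃ n, T n)
  have hκle : κ ≤ #(⋃ n, T n) := by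
    rw [← hκ]
    exact csInf_le' ⟨⋃ n, T n, hdense, rfl⟩
  -- some T n has cardinality κ
  have hex : ∃ n, #(T n) = κ := by
    by_contra h
    push_neg at h
    have hlt : ∀ n, #(T n) < κ := fun n => lt_of_le_of_ne (hle n) (h n)
    have hsup : (⨆ n, #(T n)) < κ := by
      refine Ordinal.iSup_lt ?_ hlt
      simpa using hcof
    have hℕ : #(ULift.{u} ℕ) < κ := by
      calc #(ULift.{u} ℕ) = ℵ₀ := by simp
        _ < κ.ord.cof := hcof
        _ ≤ κ := by simpa using Ordinal.cof_ord_le κ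
    have := Cardinal.mk_iUnion_le T
    have hbad : #(⋃ n, T n) < κ :=
      this.trans_lt (Cardinal.mul_lt_of_lt hinf hℕ hsup)
    exact absurd hκle (not_le.mpr hbad)
  obtain ⟨n, hn⟩ := hex
  exact ⟨1 / (n.down + 1), hεpos n, T n, hn, hT1 n⟩
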